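/- Fix δ ∈ (0,1), ρ_n ∈ (0,1], and (x_i, x_j) ∈ X₂(δ). Define g(u,v) = v/(uᵀv(1 − ρ_n uᵀv)) and h(u,v) = (x_iᵀx_j − uᵀv)·v/(uᵀv(1 − ρ_n uᵀv)) for (u,v) ∈ X₂(δ/2), and let r_g(u,v) and r_h(u,v) be their first-order Taylor remainders at (x_i, x_j), i.e. r_g(u,v) = g(u,v) − g(x_i,x_j) − D_u g(x_i,x_j)(u − x_i) − D_v g(x_i,x_j)(v − x_j) (where D_u, D_v denote the Jacobians in u and v), and similarly for r_h. Then there exists an absolute constant C > 0 such that for all (u,v) ∈ X₂(δ/2): (a) ‖g(u,v) − g(x_i,x_j)‖_2 ≤ C δ^{−4}(‖u − x_i‖_2 + ‖v − x_j‖_2) and ‖h(u,v) − h(x_i,x_j)‖_2 ≤ C δ^{−4}(‖u − x_i‖_2 + ‖v − x_j‖_2); (b) ‖r_g(u,v)‖_2 ≤ C d^{1/2} δ^{−6}(‖u − x_i‖_2² + ‖v − x_j‖_2²) and ‖r_h(u,v)‖_2 ≤ C d^{1/2} δ^{−6}(‖u − x_i‖_2² + ‖v − x_j‖_2²). -/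

import Mathlib

open MeasureTheory ProbabilityTheory Matrix Filter

noncomputable section

/-- Euclidean norm of a finite real vector. -/
def enorm2 {m : Type*} [Fintype m] (x : m → ℝ) : ℝ := Real.sqrt (∑ i, (x i) ^ 2)

/-- Spectral norm (`ℓ² → ℓ²` operator norm) of a real matrix. -/
def specNorm {m n : Type*} [Fintype m] [Fintype n] (M : Matrix m n ℝ) : ℝ :=
  sSup {c | ∃ x : n → ℝ, enorm2 x ≤ 1 ∧ c = enorm2 (M.mulVec x)}

/-- Frobenius norm of a real matrix. -/
def frobNorm {m n : Type*} [Fintype m] [Fintype n] (M : Matrix m n ℝ) : ℝ :=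
  Real.sqrt (∑ i, ∑ j, (M i j) ^ 2)

/-- Two-to-infinity norm: the maximum Euclidean row norm. -/
def twoInfNorm {m n : Type*} [Fintype m] [Fintype n] (M : Matrix m n ℝ) : ℝ :=
  ⨆ i, enorm2 (fun j => M i j)

/-- The `k`-th largest eigenvalue (`k` 0-indexed) of a real symmetric matrix;
junk value `0` if the matrix is not Hermitian or `k` is out of range. -/
def eig {m : Type*} [Fintype m] [DecidableEq m] (M : Matrix m m ℝ) (k : ℕ) : ℝ := by
  classical
  exact if h : M.IsHermitian ∧ k < Fintype.card m then
      h.1.eigenvalues ((Fintype.equivFin m).symm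
        ((Tuple.sort fun j : Fin (Fintype.card m) =>
          h.1.eigenvalues ((Fintype.equivFin m).symm j)) (Fin.rev ⟨k, h.2⟩)))
    else 0

/-- The sub-Gaussian norm `sup_{k ≥ 1} k^{-1/2} (E|Y|^k)^{1/k}`. -/
def subgNorm {Ω : Type*} [MeasurableSpace Ω] (μ : Measure Ω) (Y : Ω → ℝ) : ℝ :=
  ⨆ k : ℕ, if 1 ≤ k then ((k : ℝ) ^ (-(1 : ℝ) / 2)) * (∫ ω, |Y ω| ^ k ∂μ) ^ ((k : ℝ)⁻¹) else 0

/-- Replace the `m`-th row and `m`-th column of a square matrix by zeros. -/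
def zeroRC {n : ℕ} (M : Matrix (Fin n) (Fin n) ℝ) (m : Fin n) : Matrix (Fin n) (Fin n) ℝ :=
  Matrix.of fun i j => if i = m ∨ j = m then 0 else M i j

/-- Positive semidefinite square root (junk value `0` if the matrix is not psd). -/
def msqrt {m : Type*} [Fintype m] [DecidableEq m] (M : Matrix m m ℝ) : Matrix m m ℝ := by
  classical exact if h : M.PosSemidef then
    h.1.eigenvectorUnitary.1 * diagonal (RCLike.ofReal ∘ Real.sqrt ∘ h.1.eigenvalues) *
      (star h.1.eigenvectorUnitary : Matrix m m ℝ) else 0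

/-- Inverse square root `M^{-1/2} = (M^{1/2})⁻¹`. -/
def invSqrt {m : Type*} [Fintype m] [DecidableEq m] (M : Matrix m m ℝ) : Matrix m m ℝ :=
  (msqrt M)⁻¹

/-- The standard Gaussian measure `N(0, I)` on `ι → ℝ`. -/
def stdGaussian (ι : Type*) [Fintype ι] : Measure (ι → ℝ) :=
  Measure.pi fun _ => gaussianReal 0 1

/-- The set `X₂(ε)` of pairs of unit-ball vectors with inner product in `[ε, 1-ε]`. -/
def X2set (d : ℕ) (ε : ℝ) : Set ((Fin d → ℝ) × (Fin d → ℝ)) :=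
  {z | enorm2 z.1 ≤ 1 ∧ enorm2 z.2 ≤ 1 ∧ ε ≤ z.1 ⬝ᵥ z.2 ∧ z.1 ⬝ᵥ z.2 ≤ 1 - ε}

/-- The function `g(u, v) = v / (uᵀv (1 - ρ uᵀv))`. -/
def gFun {d : ℕ} (ρn : ℝ) (z : (Fin d → ℝ) × (Fin d → ℝ)) : Fin d → ℝ :=
  (z.1 ⬝ᵥ z.2 * (1 - ρn * (z.1 ⬝ᵥ z.2)))⁻¹ • z.2

/-- The function `h(u, v) = (c - uᵀv) v / (uᵀv (1 - ρ uᵀv))`. -/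
def hFun {d : ℕ} (ρn c : ℝ) (z : (Fin d → ℝ) × (Fin d → ℝ)) : Fin d → ℝ :=
  ((c - z.1 ⬝ᵥ z.2) / (z.1 ⬝ᵥ z.2 * (1 - ρn * (z.1 ⬝ᵥ z.2)))) • z.2

/-- First-order Taylor remainder of a function of a pair of vectors. -/
def taylorRem {d : ℕ} (F : (Fin d → ℝ) × (Fin d → ℝ) → (Fin d → ℝ))
    (x z : (Fin d → ℝ) × (Fin d → ℝ)) : Fin d → ℝ :=
  F z - F x - fderiv ℝ F x (z - x)


namespace S18
open Matrix
variable {d : ℕ}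

lemma enorm2_eq_norm (x : Fin d → ℝ) :
    enorm2 x = ‖(WithLp.equiv 2 (Fin d → ℝ)).symm x‖ := by
  rw [enorm2, EuclideanSpace.norm_eq]
  congr 1
  refine Finset.sum_congr rfl fun i _ => ?_
  rw [show ((WithLp.equiv 2 (Fin d → ℝ)).symm x).ofLp i = x i from rfl, Real.norm_eq_abs, sq_abs]

lemma enorm2_nonneg (x : Fin d → ℝ) : 0 ≤ enorm2 x := Real.sqrt_nonneg _

lemma enorm2_smul (c : ℝ) (x : Fin d → ℝ) : enorm2 (c • x) = |c| * enorm2 x := by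
  rw [enorm2_eq_norm, enorm2_eq_norm,
    show (WithLp.equiv 2 (Fin d → ℝ)).symm (c • x)
      = c • (WithLp.equiv 2 (Fin d → ℝ)).symm x from rfl,
    norm_smul, Real.norm_eq_abs]

lemma enorm2_add_le (x y : Fin d → ℝ) : enorm2 (x + y) ≤ enorm2 x + enorm2 y := by
  rw [enorm2_eq_norm, enorm2_eq_norm, enorm2_eq_norm,
    show (WithLp.equiv 2 (Fin d → ℝ)).symm (x + y)
      = (WithLp.equiv 2 (Fin d → ℝ)).symm x + (WithLp.equiv 2 (Fin d → ℝ)).symm y from rfl]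
  exact norm_add_le _ _

lemma abs_dot_le (x y : Fin d → ℝ) : |x ⬝ᵥ y| ≤ enorm2 x * enorm2 y := by
  rw [enorm2_eq_norm, enorm2_eq_norm]
  have h : x ⬝ᵥ y = (inner ℝ ((WithLp.equiv 2 (Fin d → ℝ)).symm x)
      ((WithLp.equiv 2 (Fin d → ℝ)).symm y) : ℝ) := by
    simp [PiLp.inner_apply, RCLike.inner_apply, dotProduct, mul_comm]
  rw [h]
  exact abs_real_inner_le_norm _ _

lemma enorm2_comb (α β : ℝ) (p q : Fin d → ℝ) :
    enorm2 (α • p + β • q) ≤ |α| * enorm2 p + |β| * enorm2 q := by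
  refine (enorm2_add_le _ _).trans ?_
  rw [enorm2_smul, enorm2_smul]

lemma frac_bound {num den m c : ℝ} (hc : 0 < c) (hden : c ≤ den) (hm : 0 ≤ m)
    (hnum : |num| ≤ m) : |num / den| ≤ m / c := by
  rw [abs_div, abs_of_pos (hc.trans_le hden)]
  exact div_le_div₀ hm hnum hc hden

def dotCLM (x : (Fin d → ℝ) × (Fin d → ℝ)) : ((Fin d → ℝ) × (Fin d → ℝ)) →L[ℝ] ℝ :=
  ∑ i : Fin d,
    (x.1 i • (ContinuousLinearMap.proj i).comp
        (ContinuousLinearMap.snd ℝ (Fin d → ℝ) (Fin d → ℝ))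
      + x.2 i • (ContinuousLinearMap.proj i).comp
        (ContinuousLinearMap.fst ℝ (Fin d → ℝ) (Fin d → ℝ)))

lemma dotCLM_apply (x w : (Fin d → ℝ) × (Fin d → ℝ)) :
    dotCLM x w = w.1 ⬝ᵥ x.2 + x.1 ⬝ᵥ w.2 := by
  simp only [dotCLM, ContinuousLinearMap.sum_apply, ContinuousLinearMap.add_apply,
    ContinuousLinearMap.smul_apply, ContinuousLinearMap.comp_apply,
    ContinuousLinearMap.coe_fst', ContinuousLinearMap.coe_snd',
    ContinuousLinearMap.proj_apply, smul_eq_mul, dotProduct]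
  rw [Finset.sum_add_distrib, add_comm]
  congr 1 <;> exact Finset.sum_congr rfl fun i _ => mul_comm _ _

lemma hasFDerivAt_dot (x : (Fin d → ℝ) × (Fin d → ℝ)) :
    HasFDerivAt (fun z : (Fin d → ℝ) × (Fin d → ℝ) => z.1 ⬝ᵥ z.2) (dotCLM x) x := by
  simp only [dotProduct]
  exact HasFDerivAt.fun_sum fun i _ =>
    (((ContinuousLinearMap.proj i).comp
        (ContinuousLinearMap.fst ℝ (Fin d → ℝ) (Fin d → ℝ))).hasFDerivAt (x := x)).mul
      (((ContinuousLinearMap.proj i).comp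
        (ContinuousLinearMap.snd ℝ (Fin d → ℝ) (Fin d → ℝ))).hasFDerivAt (x := x))

lemma fderiv_gFun_apply (ρn : ℝ) (x : (Fin d → ℝ) × (Fin d → ℝ))
    (hφ : x.1 ⬝ᵥ x.2 * (1 - ρn * (x.1 ⬝ᵥ x.2)) ≠ 0) (w : (Fin d → ℝ) × (Fin d → ℝ)) :
    fderiv ℝ (gFun ρn) x w
      = (x.1 ⬝ᵥ x.2 * (1 - ρn * (x.1 ⬝ᵥ x.2)))⁻¹ • w.2
        + (-((1 - 2 * ρn * (x.1 ⬝ᵥ x.2)) / (x.1 ⬝ᵥ x.2 * (1 - ρn * (x.1 ⬝ᵥ x.2))) ^ 2)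
            * (w.1 ⬝ᵥ x.2 + x.1 ⬝ᵥ w.2)) • x.2 := by
  have hB := hasFDerivAt_dot x
  have hden := hB.mul ((hasFDerivAt_const (1 : ℝ) x).sub (hB.const_mul ρn))
  have hc := (hasDerivAt_inv hφ).comp_hasFDerivAt x hden
  have hg0 := hc.smul (hasFDerivAt_snd (𝕜 := ℝ) (p := x))
  have hg : HasFDerivAt (gFun ρn) _ x := hg0
  rw [hg.fderiv]
  simp only [ContinuousLinearMap.add_apply, ContinuousLinearMap.smul_apply,
    ContinuousLinearMap.smulRight_apply, ContinuousLinearMap.sub_apply,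
    ContinuousLinearMap.zero_apply, ContinuousLinearMap.coe_snd', dotCLM_apply,
    ContinuousLinearMap.neg_apply, smul_eq_mul]
  funext i
  simp only [Pi.add_apply, Pi.smul_apply, smul_eq_mul]
  simp only [Pi.sub_apply, Pi.mul_apply, Function.comp_apply, Pi.neg_apply, Pi.smul_apply, smul_eq_mul]
  generalize x.1 ⬝ᵥ x.2 = s at hφ ⊢
  have h1 := left_ne_zero_of_mul hφ
  have h2 := right_ne_zero_of_mul hφ
  field_simp
  ring


lemma fderiv_hFun_apply (ρn : ℝ) (x : (Fin d → ℝ) × (Fin d → ℝ))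
    (hφ : x.1 ⬝ᵥ x.2 * (1 - ρn * (x.1 ⬝ᵥ x.2)) ≠ 0) (w : (Fin d → ℝ) × (Fin d → ℝ)) :
    fderiv ℝ (hFun ρn (x.1 ⬝ᵥ x.2)) x w
      = (-((w.1 ⬝ᵥ x.2 + x.1 ⬝ᵥ w.2) / (x.1 ⬝ᵥ x.2 * (1 - ρn * (x.1 ⬝ᵥ x.2))))) • x.2 := by
  have hB := hasFDerivAt_dot x
  have hden := hB.mul ((hasFDerivAt_const (1 : ℝ) x).sub (hB.const_mul ρn))
  have hinv := (hasDerivAt_inv hφ).comp_hasFDerivAt x hden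
  have hnum := (hasFDerivAt_const (x.1 ⬝ᵥ x.2) x).sub hB
  have hh0 := (hnum.mul hinv).smul (hasFDerivAt_snd (𝕜 := ℝ) (p := x))
  have hh : HasFDerivAt (hFun ρn (x.1 ⬝ᵥ x.2)) _ x := hh0
  rw [hh.fderiv]
  simp only [ContinuousLinearMap.add_apply, ContinuousLinearMap.smul_apply,
    ContinuousLinearMap.smulRight_apply, ContinuousLinearMap.sub_apply,
    ContinuousLinearMap.zero_apply, ContinuousLinearMap.coe_snd', dotCLM_apply,
    ContinuousLinearMap.neg_apply, smul_eq_mul]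
  funext i
  simp only [Pi.add_apply, Pi.smul_apply, smul_eq_mul]
  simp only [Pi.sub_apply, Pi.mul_apply, Function.comp_apply, Pi.neg_apply, Pi.smul_apply, smul_eq_mul]
  generalize x.1 ⬝ᵥ x.2 = s at hφ ⊢
  have h1 := left_ne_zero_of_mul hφ
  have h2 := right_ne_zero_of_mul hφ
  field_simp
  have hI : (1 - s * ρn * 2 + s ^ 2 * ρn ^ 2)⁻¹ * (1 - s * ρn) ^ 2 = 1 := by
    rw [show (1 - s * ρn) ^ 2 = 1 - s * ρn * 2 + s ^ 2 * ρn ^ 2 by ring]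
    refine inv_mul_cancel₀ ?_
    rw [show 1 - s * ρn * 2 + s ^ 2 * ρn ^ 2 = (1 - ρn * s) ^ 2 by ring]
    exact pow_ne_zero 2 h2
  have hJ : (1 - s * ρn)⁻¹ * (1 - s * ρn) = 1 :=
    inv_mul_cancel₀ (by rw [mul_comm]; exact h2)
  linear_combination (-(w.1 ⬝ᵥ x.2 * x.2 i + x.1 ⬝ᵥ w.2 * x.2 i) * (1 - s * ρn)⁻¹) * hI
    + ((w.1 ⬝ᵥ x.2 * x.2 i + x.1 ⬝ᵥ w.2 * x.2 i) * (1 - s * ρn) * (1 - s * ρn * 2 + s ^ 2 * ρn ^ 2)⁻¹) * hJ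


lemma gdiff (ρn : ℝ) (xi xj u v : Fin d → ℝ) :
    gFun ρn (u, v) - gFun ρn (xi, xj)
      = (u ⬝ᵥ v * (1 - ρn * (u ⬝ᵥ v)))⁻¹ • (v - xj)
        + ((u ⬝ᵥ v * (1 - ρn * (u ⬝ᵥ v)))⁻¹ - (xi ⬝ᵥ xj * (1 - ρn * (xi ⬝ᵥ xj)))⁻¹) • xj := by
  funext i
  simp only [gFun, Pi.sub_apply, Pi.add_apply, Pi.smul_apply, smul_eq_mul]
  ring

lemma hdiff (ρn : ℝ) (xi xj u v : Fin d → ℝ) :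
    hFun ρn (xi ⬝ᵥ xj) (u, v) - hFun ρn (xi ⬝ᵥ xj) (xi, xj)
      = ((xi ⬝ᵥ xj - u ⬝ᵥ v) / (u ⬝ᵥ v * (1 - ρn * (u ⬝ᵥ v)))) • v := by
  funext i
  simp only [hFun, Pi.sub_apply, Pi.smul_apply, smul_eq_mul]
  ring

lemma gtaylor (ρn : ℝ) (xi xj u v : Fin d → ℝ)
    (hφ : xi ⬝ᵥ xj * (1 - ρn * (xi ⬝ᵥ xj)) ≠ 0) :
    taylorRem (gFun ρn) (xi, xj) (u, v)
      = ((u ⬝ᵥ v * (1 - ρn * (u ⬝ᵥ v)))⁻¹ - (xi ⬝ᵥ xj * (1 - ρn * (xi ⬝ᵥ xj)))⁻¹) • (v - xj)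
        + ((u ⬝ᵥ v * (1 - ρn * (u ⬝ᵥ v)))⁻¹ - (xi ⬝ᵥ xj * (1 - ρn * (xi ⬝ᵥ xj)))⁻¹
            + (1 - 2 * ρn * (xi ⬝ᵥ xj)) / (xi ⬝ᵥ xj * (1 - ρn * (xi ⬝ᵥ xj))) ^ 2
              * ((u - xi) ⬝ᵥ xj + xi ⬝ᵥ (v - xj))) • xj := by
  unfold taylorRem
  rw [fderiv_gFun_apply ρn (xi, xj) hφ]
  funext i
  simp only [gFun, Pi.sub_apply, Pi.add_apply, Pi.smul_apply, smul_eq_mul,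
    Prod.fst_sub, Prod.snd_sub]
  ring

lemma htaylor (ρn : ℝ) (xi xj u v : Fin d → ℝ)
    (hφ : xi ⬝ᵥ xj * (1 - ρn * (xi ⬝ᵥ xj)) ≠ 0) :
    taylorRem (hFun ρn (xi ⬝ᵥ xj)) (xi, xj) (u, v)
      = ((xi ⬝ᵥ xj - u ⬝ᵥ v) / (u ⬝ᵥ v * (1 - ρn * (u ⬝ᵥ v)))) • (v - xj)
        + ((xi ⬝ᵥ xj - u ⬝ᵥ v) / (u ⬝ᵥ v * (1 - ρn * (u ⬝ᵥ v)))
            + ((u - xi) ⬝ᵥ xj + xi ⬝ᵥ (v - xj)) / (xi ⬝ᵥ xj * (1 - ρn * (xi ⬝ᵥ xj)))) • xj := by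
  unfold taylorRem
  rw [fderiv_hFun_apply ρn (xi, xj) hφ]
  funext i
  simp only [hFun, Pi.sub_apply, Pi.add_apply, Pi.smul_apply, smul_eq_mul,
    Prod.fst_sub, Prod.snd_sub]
  ring

lemma I1 {s t ρ : ℝ} (hs : s * (1 - ρ * s) ≠ 0) (ht : t * (1 - ρ * t) ≠ 0) :
    (t * (1 - ρ * t))⁻¹ - (s * (1 - ρ * s))⁻¹
      = -((t - s) * (1 - ρ * (s + t))) / (t * (1 - ρ * t) * (s * (1 - ρ * s))) := by
  rw [inv_sub_inv ht hs]
  congr 1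
  ring

lemma I2 {s t ρ b : ℝ} (hs : s * (1 - ρ * s) ≠ 0) (ht : t * (1 - ρ * t) ≠ 0) :
    (t * (1 - ρ * t))⁻¹ - (s * (1 - ρ * s))⁻¹
        + (1 - 2 * ρ * s) / (s * (1 - ρ * s)) ^ 2 * ((t - s) - b)
      = (t - s) ^ 2 * ((1 - 2 * (ρ * s)) + (ρ * s) * (1 - (ρ * s)) - (1 - 2 * (ρ * s)) * ((ρ * t) + (ρ * s)))
          / ((s * (1 - ρ * s)) ^ 2 * (t * (1 - ρ * t)))
        - (1 - 2 * ρ * s) * b / (s * (1 - ρ * s)) ^ 2 := by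
  rw [inv_sub_inv ht hs, div_mul_eq_mul_div, div_add_div _ _ (mul_ne_zero ht hs) (pow_ne_zero 2 hs),
    div_sub_div _ _ (mul_ne_zero (pow_ne_zero 2 hs) ht) (pow_ne_zero 2 hs),
    div_eq_div_iff (mul_ne_zero (mul_ne_zero ht hs) (pow_ne_zero 2 hs))
      (mul_ne_zero (mul_ne_zero (pow_ne_zero 2 hs) ht) (pow_ne_zero 2 hs))]
  ring

lemma Pbound {p q : ℝ} (hp0 : 0 ≤ p) (hp1 : p ≤ 1) (hq0 : 0 ≤ q) (hq1 : q ≤ 1) :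
    |(1 - 2 * p) + p * (1 - p) - (1 - 2 * p) * (q + p)| ≤ 4 := by
  rw [abs_le]
  constructor <;> nlinarith

lemma I3 {s t ρ b : ℝ} (hs : s * (1 - ρ * s) ≠ 0) (ht : t * (1 - ρ * t) ≠ 0) :
    (s - t) / (t * (1 - ρ * t)) + ((t - s) - b) / (s * (1 - ρ * s))
      = (t - s) ^ 2 * (1 - ρ * (s + t)) / (t * (1 - ρ * t) * (s * (1 - ρ * s)))
        - b / (s * (1 - ρ * s)) := by
  rw [div_add_div _ _ ht hs, div_sub_div _ _ (mul_ne_zero ht hs) hs,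
    div_eq_div_iff (mul_ne_zero ht hs) (mul_ne_zero (mul_ne_zero ht hs) hs)]
  ring

lemma sqA {a b : ℝ} : (a + b) * b ≤ 2 * (a ^ 2 + b ^ 2) := by
  nlinarith [sq_nonneg (a - b), sq_nonneg (a + b), sq_nonneg b]

lemma sqB {a b : ℝ} : (a + b) ^ 2 ≤ 2 * (a ^ 2 + b ^ 2) := by
  nlinarith [sq_nonneg (a - b)]

lemma sqC {a b : ℝ} : a * b ≤ a ^ 2 + b ^ 2 := by
  nlinarith [sq_nonneg (a - b), sq_nonneg (a + b)]

end S18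

set_option maxHeartbeats 16000000 in
/-- Taylor expansion bounds for `g` and `h_{ij}`. -/
theorem stmt_18 :
    ∃ C : ℝ, 0 < C ∧
      ∀ (d : ℕ) (δ ρn : ℝ), δ ∈ Set.Ioo (0 : ℝ) 1 → ρn ∈ Set.Ioc (0 : ℝ) 1 →
      ∀ xi xj : Fin d → ℝ, (xi, xj) ∈ X2set d δ →
      ∀ u v : Fin d → ℝ, (u, v) ∈ X2set d (δ / 2) →
      (enorm2 (gFun ρn (u, v) - gFun ρn (xi, xj))
          ≤ C * δ⁻¹ ^ 4 * (enorm2 (u - xi) + enorm2 (v - xj)) ∧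
        enorm2 (hFun ρn (xi ⬝ᵥ xj) (u, v) - hFun ρn (xi ⬝ᵥ xj) (xi, xj))
          ≤ C * δ⁻¹ ^ 4 * (enorm2 (u - xi) + enorm2 (v - xj))) ∧
      (enorm2 (taylorRem (gFun ρn) (xi, xj) (u, v))
          ≤ C * Real.sqrt d * δ⁻¹ ^ 6 * (enorm2 (u - xi) ^ 2 + enorm2 (v - xj) ^ 2) ∧
        enorm2 (taylorRem (hFun ρn (xi ⬝ᵥ xj)) (xi, xj) (u, v))
          ≤ C * Real.sqrt d * δ⁻¹ ^ 6 * (enorm2 (u - xi) ^ 2 + enorm2 (v - xj) ^ 2)) := by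
  refine ⟨1000, by norm_num, ?_⟩
  intro d δ ρn hδ hρ xi xj hx u v h2
  obtain ⟨hδ0, hδ1⟩ := hδ
  obtain ⟨hρ0, hρ1⟩ := hρ
  simp only [X2set, Set.mem_setOf_eq] at hx h2
  obtain ⟨hxi1, hxj1, hsl, hsu⟩ := hx
  obtain ⟨hu1, hv1, htl, htu⟩ := h2
  rcases Nat.eq_zero_or_pos d with hd0 | hdpos
  · subst hd0
    have hz : ∀ x : Fin 0 → ℝ, enorm2 x = 0 := fun x => by simp [enorm2]
    refine ⟨⟨?_, ?_⟩, ?_, ?_⟩ <;> simp [hz]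
  have hδne : δ ≠ 0 := ne_of_gt hδ0
  have hsqd : (1 : ℝ) ≤ Real.sqrt d := by
    rw [show (1 : ℝ) = Real.sqrt 1 from Real.sqrt_one.symm]
    exact Real.sqrt_le_sqrt (by exact_mod_cast hdpos)
  have hNU0 : 0 ≤ enorm2 (u - xi) := S18.enorm2_nonneg _
  have hNV0 : 0 ≤ enorm2 (v - xj) := S18.enorm2_nonneg _
  have hs0 : (0 : ℝ) ≤ xi ⬝ᵥ xj := le_trans hδ0.le hsl
  have ht0 : (0 : ℝ) ≤ u ⬝ᵥ v := le_trans (by linarith) htl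
  have hρs : ρn * (xi ⬝ᵥ xj) ≤ xi ⬝ᵥ xj := by
    have := mul_le_mul_of_nonneg_right hρ1 hs0
    linarith
  have hρt : ρn * (u ⬝ᵥ v) ≤ u ⬝ᵥ v := by
    have := mul_le_mul_of_nonneg_right hρ1 ht0
    linarith
  have hρs0 : 0 ≤ ρn * (xi ⬝ᵥ xj) := mul_nonneg hρ0.le hs0
  have hρt0 : 0 ≤ ρn * (u ⬝ᵥ v) := mul_nonneg hρ0.le ht0
  have hPS_lb : δ ^ 2 ≤ xi ⬝ᵥ xj * (1 - ρn * (xi ⬝ᵥ xj)) := by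
    have := mul_le_mul hsl (show δ ≤ 1 - ρn * (xi ⬝ᵥ xj) by linarith) hδ0.le hs0
    nlinarith [this]
  have hPS_ub : xi ⬝ᵥ xj * (1 - ρn * (xi ⬝ᵥ xj)) ≤ 1 := by
    have := mul_le_mul (show xi ⬝ᵥ xj ≤ 1 by linarith)
      (show 1 - ρn * (xi ⬝ᵥ xj) ≤ 1 by linarith) (by linarith) zero_le_one
    linarith
  have hPT_lb : δ ^ 2 / 4 ≤ u ⬝ᵥ v * (1 - ρn * (u ⬝ᵥ v)) := by
    have := mul_le_mul htl (show δ / 2 ≤ 1 - ρn * (u ⬝ᵥ v) by linarith)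
      (by linarith) ht0
    linarith [this]
  have hPT_ub : u ⬝ᵥ v * (1 - ρn * (u ⬝ᵥ v)) ≤ 1 := by
    have := mul_le_mul (show u ⬝ᵥ v ≤ 1 by linarith)
      (show 1 - ρn * (u ⬝ᵥ v) ≤ 1 by linarith) (by linarith) zero_le_one
    linarith
  have hPS_pos : 0 < xi ⬝ᵥ xj * (1 - ρn * (xi ⬝ᵥ xj)) :=
    lt_of_lt_of_le (by positivity) hPS_lb
  have hPT_pos : 0 < u ⬝ᵥ v * (1 - ρn * (u ⬝ᵥ v)) :=
    lt_of_lt_of_le (by positivity) hPT_lb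
  have hPS_ne : xi ⬝ᵥ xj * (1 - ρn * (xi ⬝ᵥ xj)) ≠ 0 := ne_of_gt hPS_pos
  have hPT_ne : u ⬝ᵥ v * (1 - ρn * (u ⬝ᵥ v)) ≠ 0 := ne_of_gt hPT_pos
  have hts : u ⬝ᵥ v - xi ⬝ᵥ xj = (u - xi) ⬝ᵥ v + xi ⬝ᵥ (v - xj) := by
    simp only [sub_dotProduct, dotProduct_sub]
    ring
  have hab : (u - xi) ⬝ᵥ xj + xi ⬝ᵥ (v - xj)
      = (u ⬝ᵥ v - xi ⬝ᵥ xj) - (u - xi) ⬝ᵥ (v - xj) := by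
    simp only [sub_dotProduct, dotProduct_sub]
    ring
  have he_abs : |u ⬝ᵥ v - xi ⬝ᵥ xj| ≤ enorm2 (u - xi) + enorm2 (v - xj) := by
    rw [hts]
    refine (abs_add_le _ _).trans ?_
    have k1 := S18.abs_dot_le (u - xi) v
    have k2 := S18.abs_dot_le xi (v - xj)
    have k3 : enorm2 (u - xi) * enorm2 v ≤ enorm2 (u - xi) * 1 :=
      mul_le_mul_of_nonneg_left hv1 hNU0
    have k4 : enorm2 xi * enorm2 (v - xj) ≤ 1 * enorm2 (v - xj) :=
      mul_le_mul_of_nonneg_right hxi1 hNV0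
    linarith
  have hb_abs : |(u - xi) ⬝ᵥ (v - xj)| ≤ enorm2 (u - xi) * enorm2 (v - xj) :=
    S18.abs_dot_le _ _
  have h1rho : |1 - ρn * (xi ⬝ᵥ xj + u ⬝ᵥ v)| ≤ 1 := by
    rw [abs_le, mul_add]
    constructor <;> linarith
  have h2rho : |1 - 2 * ρn * (xi ⬝ᵥ xj)| ≤ 1 := by
    rw [abs_le]
    have : 2 * ρn * (xi ⬝ᵥ xj) = 2 * (ρn * (xi ⬝ᵥ xj)) := by ring
    rw [this]
    constructor <;> linarith
  have he2 : (u ⬝ᵥ v - xi ⬝ᵥ xj) ^ 2 ≤ (enorm2 (u - xi) + enorm2 (v - xj)) ^ 2 := by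
    rw [← sq_abs]
    exact pow_le_pow_left₀ (abs_nonneg _) he_abs 2
  have hsq1 : δ ^ 2 ≤ 1 := by
    linarith [mul_le_mul hδ1.le hδ1.le hδ0.le zero_le_one]
  have hd42 : δ ^ 4 ≤ δ ^ 2 := by
    linarith [mul_le_mul_of_nonneg_left hsq1 (sq_nonneg δ)]
  have hd64 : δ ^ 6 ≤ δ ^ 4 := by
    linarith [mul_le_mul_of_nonneg_left hsq1 (pow_nonneg hδ0.le 4)]
  have hd24 : (δ ^ 2)⁻¹ ≤ (δ ^ 4)⁻¹ := by
    apply inv_anti₀ (by positivity) hd42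
  have hd46 : (δ ^ 4)⁻¹ ≤ (δ ^ 6)⁻¹ := by
    apply inv_anti₀ (by positivity) hd64
  have hd26 : (δ ^ 2)⁻¹ ≤ (δ ^ 6)⁻¹ := le_trans hd24 hd46
  have hK2 : (0 : ℝ) < (δ ^ 2)⁻¹ := by positivity
  have hK4 : (0 : ℝ) < (δ ^ 4)⁻¹ := by positivity
  have hK6 : (0 : ℝ) < (δ ^ 6)⁻¹ := by positivity
  have conv2 : ∀ m : ℝ, m / (δ ^ 2 / 4) = 4 * m * (δ ^ 2)⁻¹ := fun m => by
    rw [div_div_eq_mul_div, div_eq_mul_inv]; ring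
  have conv4 : ∀ m : ℝ, m / (δ ^ 4 / 4) = 4 * m * (δ ^ 4)⁻¹ := fun m => by
    rw [div_div_eq_mul_div, div_eq_mul_inv]; ring
  have conv6 : ∀ m : ℝ, m / (δ ^ 6 / 4) = 4 * m * (δ ^ 6)⁻¹ := fun m => by
    rw [div_div_eq_mul_div, div_eq_mul_inv]; ring
  have hden4 : δ ^ 4 ≤ (xi ⬝ᵥ xj * (1 - ρn * (xi ⬝ᵥ xj))) ^ 2 := by
    have := mul_le_mul hPS_lb hPS_lb (by positivity) hPS_pos.le
    linarith [this]
  have hden44 : δ ^ 4 / 4 ≤ u ⬝ᵥ v * (1 - ρn * (u ⬝ᵥ v)) * (xi ⬝ᵥ xj * (1 - ρn * (xi ⬝ᵥ xj))) := by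
    have := mul_le_mul hPT_lb hPS_lb (by positivity) hPT_pos.le
    linarith [this]
  have hden6 : δ ^ 6 / 4
      ≤ (xi ⬝ᵥ xj * (1 - ρn * (xi ⬝ᵥ xj))) ^ 2 * (u ⬝ᵥ v * (1 - ρn * (u ⬝ᵥ v))) := by
    have q1 : δ ^ 4 * (δ ^ 2 / 4)
        ≤ (xi ⬝ᵥ xj * (1 - ρn * (xi ⬝ᵥ xj))) ^ 2 * (u ⬝ᵥ v * (1 - ρn * (u ⬝ᵥ v))) :=
      mul_le_mul hden4 hPT_lb (by positivity) (by positivity)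
    linarith [q1]
  have hA : |(u ⬝ᵥ v * (1 - ρn * (u ⬝ᵥ v)))⁻¹| ≤ 4 * (δ ^ 2)⁻¹ := by
    rw [abs_of_pos (inv_pos.2 hPT_pos)]
    have h := inv_anti₀ (show (0:ℝ) < δ ^ 2 / 4 by positivity) hPT_lb
    calc (u ⬝ᵥ v * (1 - ρn * (u ⬝ᵥ v)))⁻¹ ≤ (δ ^ 2 / 4)⁻¹ := h
    _ = 4 * (δ ^ 2)⁻¹ := by rw [div_eq_mul_inv, mul_inv, inv_inv]; ring
  have hB : |(u ⬝ᵥ v * (1 - ρn * (u ⬝ᵥ v)))⁻¹ - (xi ⬝ᵥ xj * (1 - ρn * (xi ⬝ᵥ xj)))⁻¹|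
      ≤ 4 * (enorm2 (u - xi) + enorm2 (v - xj)) * (δ ^ 4)⁻¹ := by
    rw [S18.I1 hPS_ne hPT_ne, ← conv4]
    refine S18.frac_bound (by positivity) hden44 (by positivity) ?_
    rw [abs_neg, abs_mul]
    calc |u ⬝ᵥ v - xi ⬝ᵥ xj| * |1 - ρn * (xi ⬝ᵥ xj + u ⬝ᵥ v)|
        ≤ (enorm2 (u - xi) + enorm2 (v - xj)) * 1 :=
          mul_le_mul he_abs h1rho (abs_nonneg _) (by positivity)
    _ = enorm2 (u - xi) + enorm2 (v - xj) := mul_one _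
  have hpsi : |(xi ⬝ᵥ xj - u ⬝ᵥ v) / (u ⬝ᵥ v * (1 - ρn * (u ⬝ᵥ v)))|
      ≤ 4 * (enorm2 (u - xi) + enorm2 (v - xj)) * (δ ^ 2)⁻¹ := by
    rw [← conv2]
    refine S18.frac_bound (by positivity) hPT_lb (by positivity) ?_
    rw [abs_sub_comm]
    exact he_abs
  have p1 : (enorm2 (u - xi) + enorm2 (v - xj)) * enorm2 (v - xj)
      ≤ 2 * (enorm2 (u - xi) ^ 2 + enorm2 (v - xj) ^ 2) := S18.sqA
  have p2 : (enorm2 (u - xi) + enorm2 (v - xj)) ^ 2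
      ≤ 2 * (enorm2 (u - xi) ^ 2 + enorm2 (v - xj) ^ 2) := S18.sqB
  have p3 : enorm2 (u - xi) * enorm2 (v - xj)
      ≤ enorm2 (u - xi) ^ 2 + enorm2 (v - xj) ^ 2 := S18.sqC
  have hSnn : (0:ℝ) ≤ enorm2 (u - xi) ^ 2 + enorm2 (v - xj) ^ 2 := by positivity
  have c5 : (δ ^ 6)⁻¹ * (enorm2 (u - xi) ^ 2 + enorm2 (v - xj) ^ 2)
      ≤ Real.sqrt d * ((δ ^ 6)⁻¹ * (enorm2 (u - xi) ^ 2 + enorm2 (v - xj) ^ 2)) :=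
    le_mul_of_one_le_left (by positivity) hsqd
  have c6 : (0:ℝ) ≤ (δ ^ 6)⁻¹ * (enorm2 (u - xi) ^ 2 + enorm2 (v - xj) ^ 2) := by positivity
  refine ⟨⟨?_, ?_⟩, ?_, ?_⟩
  · -- (a) for g
    rw [S18.gdiff]
    refine (S18.enorm2_comb _ _ _ _).trans ?_
    rw [inv_pow]
    have c1 := mul_le_mul_of_nonneg_right hA hNV0
    have c1' : 4 * (δ ^ 2)⁻¹ * enorm2 (v - xj) ≤ 4 * (δ ^ 4)⁻¹ * enorm2 (v - xj) :=
      mul_le_mul_of_nonneg_right (by linarith) hNV0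
    have c2 : |(u ⬝ᵥ v * (1 - ρn * (u ⬝ᵥ v)))⁻¹ - (xi ⬝ᵥ xj * (1 - ρn * (xi ⬝ᵥ xj)))⁻¹|
          * enorm2 xj
        ≤ (4 * (enorm2 (u - xi) + enorm2 (v - xj)) * (δ ^ 4)⁻¹) * 1 :=
      mul_le_mul hB hxj1 (S18.enorm2_nonneg xj) (by positivity)
    have c3 : 0 ≤ (δ ^ 4)⁻¹ * enorm2 (u - xi) := mul_nonneg hK4.le hNU0
    have c4 : 0 ≤ (δ ^ 4)⁻¹ * enorm2 (v - xj) := mul_nonneg hK4.le hNV0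
    linarith
  · -- (a) for h
    rw [S18.hdiff, S18.enorm2_smul, inv_pow]
    have c1 : |(xi ⬝ᵥ xj - u ⬝ᵥ v) / (u ⬝ᵥ v * (1 - ρn * (u ⬝ᵥ v)))| * enorm2 v
        ≤ (4 * (enorm2 (u - xi) + enorm2 (v - xj)) * (δ ^ 2)⁻¹) * 1 :=
      mul_le_mul hpsi hv1 (S18.enorm2_nonneg v) (by positivity)
    have c2 : (enorm2 (u - xi) + enorm2 (v - xj)) * (δ ^ 2)⁻¹
        ≤ (enorm2 (u - xi) + enorm2 (v - xj)) * (δ ^ 4)⁻¹ :=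
      mul_le_mul_of_nonneg_left hd24 (by positivity)
    have c3 : 0 ≤ (δ ^ 4)⁻¹ * enorm2 (u - xi) := mul_nonneg hK4.le hNU0
    have c4 : 0 ≤ (δ ^ 4)⁻¹ * enorm2 (v - xj) := mul_nonneg hK4.le hNV0
    linarith
  · -- (b) for g
    rw [S18.gtaylor ρn xi xj u v hPS_ne]
    refine (S18.enorm2_comb _ _ _ _).trans ?_
    have hDg : |(u ⬝ᵥ v * (1 - ρn * (u ⬝ᵥ v)))⁻¹ - (xi ⬝ᵥ xj * (1 - ρn * (xi ⬝ᵥ xj)))⁻¹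
        + (1 - 2 * ρn * (xi ⬝ᵥ xj)) / (xi ⬝ᵥ xj * (1 - ρn * (xi ⬝ᵥ xj))) ^ 2
          * ((u - xi) ⬝ᵥ xj + xi ⬝ᵥ (v - xj))|
        ≤ 4 * (4 * (enorm2 (u - xi) + enorm2 (v - xj)) ^ 2) * (δ ^ 6)⁻¹
          + enorm2 (u - xi) * enorm2 (v - xj) * (δ ^ 4)⁻¹ := by
      rw [hab, S18.I2 hPS_ne hPT_ne]
      refine (abs_sub _ _).trans ?_
      have hX : |(u ⬝ᵥ v - xi ⬝ᵥ xj) ^ 2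
            * ((1 - 2 * (ρn * (xi ⬝ᵥ xj))) + (ρn * (xi ⬝ᵥ xj)) * (1 - (ρn * (xi ⬝ᵥ xj)))
              - (1 - 2 * (ρn * (xi ⬝ᵥ xj))) * ((ρn * (u ⬝ᵥ v)) + (ρn * (xi ⬝ᵥ xj))))
            / ((xi ⬝ᵥ xj * (1 - ρn * (xi ⬝ᵥ xj))) ^ 2 * (u ⬝ᵥ v * (1 - ρn * (u ⬝ᵥ v))))|
          ≤ 4 * (4 * (enorm2 (u - xi) + enorm2 (v - xj)) ^ 2) * (δ ^ 6)⁻¹ := by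
        rw [← conv6]
        refine S18.frac_bound (by positivity) hden6 (by positivity) ?_
        rw [abs_mul]
        have hP := S18.Pbound hρs0 (by linarith) hρt0 (by linarith)
        calc |(u ⬝ᵥ v - xi ⬝ᵥ xj) ^ 2| * _ ≤ (enorm2 (u - xi) + enorm2 (v - xj)) ^ 2 * 4 := by
              rw [abs_pow, sq_abs]
              exact mul_le_mul he2 hP (abs_nonneg _) (by positivity)
        _ = 4 * (enorm2 (u - xi) + enorm2 (v - xj)) ^ 2 := by ring
      have hY : |(1 - 2 * ρn * (xi ⬝ᵥ xj)) * ((u - xi) ⬝ᵥ (v - xj))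
            / (xi ⬝ᵥ xj * (1 - ρn * (xi ⬝ᵥ xj))) ^ 2|
          ≤ enorm2 (u - xi) * enorm2 (v - xj) * (δ ^ 4)⁻¹ := by
        rw [show enorm2 (u - xi) * enorm2 (v - xj) * (δ ^ 4)⁻¹
            = enorm2 (u - xi) * enorm2 (v - xj) / δ ^ 4 from (div_eq_mul_inv _ _).symm]
        refine S18.frac_bound (by positivity) hden4 (by positivity) ?_
        rw [abs_mul]
        calc |1 - 2 * ρn * (xi ⬝ᵥ xj)| * |(u - xi) ⬝ᵥ (v - xj)|
            ≤ 1 * (enorm2 (u - xi) * enorm2 (v - xj)) :=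
              mul_le_mul h2rho hb_abs (abs_nonneg _) zero_le_one
        _ = enorm2 (u - xi) * enorm2 (v - xj) := one_mul _
      linarith
    rw [inv_pow]
    have c1 := mul_le_mul_of_nonneg_right hB hNV0
    have c1' : 4 * (enorm2 (u - xi) + enorm2 (v - xj)) * (δ ^ 4)⁻¹ * enorm2 (v - xj)
        ≤ 4 * (δ ^ 6)⁻¹ * (2 * (enorm2 (u - xi) ^ 2 + enorm2 (v - xj) ^ 2)) := by
      have e1 : 4 * (enorm2 (u - xi) + enorm2 (v - xj)) * (δ ^ 4)⁻¹ * enorm2 (v - xj)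
          = (4 * (δ ^ 4)⁻¹) * ((enorm2 (u - xi) + enorm2 (v - xj)) * enorm2 (v - xj)) := by
        ring
      rw [e1]
      exact mul_le_mul (by linarith) p1 (by positivity) (by positivity)
    have c2 : |(u ⬝ᵥ v * (1 - ρn * (u ⬝ᵥ v)))⁻¹ - (xi ⬝ᵥ xj * (1 - ρn * (xi ⬝ᵥ xj)))⁻¹
          + (1 - 2 * ρn * (xi ⬝ᵥ xj)) / (xi ⬝ᵥ xj * (1 - ρn * (xi ⬝ᵥ xj))) ^ 2
            * ((u - xi) ⬝ᵥ xj + xi ⬝ᵥ (v - xj))| * enorm2 xj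
        ≤ (4 * (4 * (enorm2 (u - xi) + enorm2 (v - xj)) ^ 2) * (δ ^ 6)⁻¹
            + enorm2 (u - xi) * enorm2 (v - xj) * (δ ^ 4)⁻¹) * 1 :=
      mul_le_mul hDg hxj1 (S18.enorm2_nonneg xj) (by positivity)
    have c3 : 4 * (4 * (enorm2 (u - xi) + enorm2 (v - xj)) ^ 2) * (δ ^ 6)⁻¹
        ≤ 16 * (2 * (enorm2 (u - xi) ^ 2 + enorm2 (v - xj) ^ 2)) * (δ ^ 6)⁻¹ :=
      mul_le_mul_of_nonneg_right (by linarith) hK6.le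
    have c4 : enorm2 (u - xi) * enorm2 (v - xj) * (δ ^ 4)⁻¹
        ≤ (enorm2 (u - xi) ^ 2 + enorm2 (v - xj) ^ 2) * (δ ^ 6)⁻¹ :=
      mul_le_mul p3 hd46 hK4.le hSnn
    linarith
  · -- (b) for h
    rw [S18.htaylor ρn xi xj u v hPS_ne]
    refine (S18.enorm2_comb _ _ _ _).trans ?_
    have hDh : |(xi ⬝ᵥ xj - u ⬝ᵥ v) / (u ⬝ᵥ v * (1 - ρn * (u ⬝ᵥ v)))
        + ((u - xi) ⬝ᵥ xj + xi ⬝ᵥ (v - xj)) / (xi ⬝ᵥ xj * (1 - ρn * (xi ⬝ᵥ xj)))|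
        ≤ 4 * (enorm2 (u - xi) + enorm2 (v - xj)) ^ 2 * (δ ^ 4)⁻¹
          + enorm2 (u - xi) * enorm2 (v - xj) * (δ ^ 2)⁻¹ := by
      rw [hab, S18.I3 hPS_ne hPT_ne]
      refine (abs_sub _ _).trans ?_
      have hX : |(u ⬝ᵥ v - xi ⬝ᵥ xj) ^ 2 * (1 - ρn * (xi ⬝ᵥ xj + u ⬝ᵥ v))
            / (u ⬝ᵥ v * (1 - ρn * (u ⬝ᵥ v)) * (xi ⬝ᵥ xj * (1 - ρn * (xi ⬝ᵥ xj))))|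
          ≤ 4 * (enorm2 (u - xi) + enorm2 (v - xj)) ^ 2 * (δ ^ 4)⁻¹ := by
        rw [← conv4]
        refine S18.frac_bound (by positivity) hden44 (by positivity) ?_
        rw [abs_mul]
        calc |(u ⬝ᵥ v - xi ⬝ᵥ xj) ^ 2| * |1 - ρn * (xi ⬝ᵥ xj + u ⬝ᵥ v)|
            ≤ (enorm2 (u - xi) + enorm2 (v - xj)) ^ 2 * 1 := by
              rw [abs_pow, sq_abs]
              exact mul_le_mul he2 h1rho (abs_nonneg _) (by positivity)
        _ = (enorm2 (u - xi) + enorm2 (v - xj)) ^ 2 := mul_one _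
      have hY : |(u - xi) ⬝ᵥ (v - xj) / (xi ⬝ᵥ xj * (1 - ρn * (xi ⬝ᵥ xj)))|
          ≤ enorm2 (u - xi) * enorm2 (v - xj) * (δ ^ 2)⁻¹ := by
        rw [show enorm2 (u - xi) * enorm2 (v - xj) * (δ ^ 2)⁻¹
            = enorm2 (u - xi) * enorm2 (v - xj) / δ ^ 2 from (div_eq_mul_inv _ _).symm]
        exact S18.frac_bound (by positivity) hPS_lb (by positivity) hb_abs
      linarith
    rw [inv_pow]
    have c1 := mul_le_mul_of_nonneg_right hpsi hNV0
    have c1' : 4 * (enorm2 (u - xi) + enorm2 (v - xj)) * (δ ^ 2)⁻¹ * enorm2 (v - xj)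
        ≤ 4 * (δ ^ 6)⁻¹ * (2 * (enorm2 (u - xi) ^ 2 + enorm2 (v - xj) ^ 2)) := by
      have e1 : 4 * (enorm2 (u - xi) + enorm2 (v - xj)) * (δ ^ 2)⁻¹ * enorm2 (v - xj)
          = (4 * (δ ^ 2)⁻¹) * ((enorm2 (u - xi) + enorm2 (v - xj)) * enorm2 (v - xj)) := by
        ring
      rw [e1]
      exact mul_le_mul (by linarith) p1 (by positivity) (by positivity)
    have c2 : |(xi ⬝ᵥ xj - u ⬝ᵥ v) / (u ⬝ᵥ v * (1 - ρn * (u ⬝ᵥ v)))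
          + ((u - xi) ⬝ᵥ xj + xi ⬝ᵥ (v - xj)) / (xi ⬝ᵥ xj * (1 - ρn * (xi ⬝ᵥ xj)))| * enorm2 xj
        ≤ (4 * (enorm2 (u - xi) + enorm2 (v - xj)) ^ 2 * (δ ^ 4)⁻¹
            + enorm2 (u - xi) * enorm2 (v - xj) * (δ ^ 2)⁻¹) * 1 :=
      mul_le_mul hDh hxj1 (S18.enorm2_nonneg xj) (by positivity)
    have c3 : 4 * (enorm2 (u - xi) + enorm2 (v - xj)) ^ 2 * (δ ^ 4)⁻¹
        ≤ (4 * (2 * (enorm2 (u - xi) ^ 2 + enorm2 (v - xj) ^ 2))) * (δ ^ 6)⁻¹ :=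
      mul_le_mul (by linarith) hd46 hK4.le (by positivity)
    have c4 : enorm2 (u - xi) * enorm2 (v - xj) * (δ ^ 2)⁻¹
        ≤ (enorm2 (u - xi) ^ 2 + enorm2 (v - xj) ^ 2) * (δ ^ 6)⁻¹ :=
      mul_le_mul p3 hd26 hK2.le hSnn
    linarith

end
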